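/- For the torus with radii R > r > 0, the energy integrand G(u, v, θ, φ) = 1/(a² + b² + c² − 2ab cos(u − v)) − 1/(r² δ(θ, φ)² + a b δ(u, v)²) (with a = R − r cos θ, b = R − r cos φ, c = r sin θ − r sin φ), which is defined off the measure-zero diagonal set {(u,v,θ,φ) : δ(u,v) = 0 and δ(θ,φ) = 0}, is nonnegative and Lebesgue integrable on [0, 2π]⁴; in particular the tube energy of the torus is finite and nonnegative. -/

import Mathlib

/-!
With `s = δ(θ, φ)`, `t = δ(u, v)`, `p = r²` and `q = ab ≥ (R - r)²`, the chord satisfies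
`‖X - Y‖² = 2p(1 - cos s) + 2q(1 - cos t)` while `d*² = p s² + q t²`. On `[-π, π]`,
`1 - cos x` lies between Jordan's `2x²/π²` and `x²/2`, and `x² - 2(1 - cos x) ≤ x⁴/12`.
The first two bounds make `‖X - Y‖²` and `d*²` comparable, which gives `1/‖X - Y‖² ≥ 1/d*²`;
the quartic one makes their difference `O((s² + t²) d*²)`, so the integrand is bounded by
`π² / (48 min(r², (R - r)²))` on the box and hence integrable there.
-/

open Real MeasureTheory

/-- Minimal angular distance between two angles in `[0, 2π]`. -/
noncomputable def angDist (x y : ℝ) : ℝ := min |x - y| (2 * Real.pi - |x - y|)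

/-- The energy integrand of the torus of radii `(R, r)`:
`G(u, v, θ, φ) = 1/‖X − Y‖² − 1/d*²(X, Y)` where `X = p(u, θ)`, `Y = p(v, φ)`. -/
noncomputable def torusIntegrand (R r : ℝ) (x : ℝ × ℝ × ℝ × ℝ) : ℝ :=
  let u := x.1; let v := x.2.1; let θ := x.2.2.1; let φ := x.2.2.2
  let a := R - r * Real.cos θ
  let b := R - r * Real.cos φ
  let c := r * Real.sin θ - r * Real.sin φ
  1 / (a ^ 2 + b ^ 2 + c ^ 2 - 2 * a * b * Real.cos (u - v)) -
    1 / (r ^ 2 * angDist θ φ ^ 2 + a * b * angDist u v ^ 2)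

lemma cos_angDist (x y : ℝ) : cos (angDist x y) = cos (x - y) := by
  rcases min_choice |x - y| (2 * π - |x - y|) with h | h <;>
    simp only [angDist, h, cos_two_pi_sub, cos_abs]

lemma abs_angDist_le_pi {x y : ℝ} (h : |x - y| ≤ 2 * π) : |angDist x y| ≤ π := by
  rw [abs_of_nonneg (le_min (abs_nonneg _) (by linarith))]
  rcases le_total |x - y| π with h' | h'
  · exact min_le_of_left_le h'
  · exact min_le_of_right_le (by linarith)

lemma sq_sub_two_mul_one_sub_cos_le (t : ℝ) : t ^ 2 - 2 * (1 - cos t) ≤ t ^ 4 / 12 := by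
  wlog ht : 0 ≤ t generalizing t
  · have h := this (-t) (by linarith)
    rwa [neg_sq, cos_neg, show (-t) ^ 4 = t ^ 4 by ring] at h
  have hsin : 1 - cos t = 2 * sin (t / 2) ^ 2 := by
    rw [sin_sq_eq_half_sub, mul_div_cancel₀ t two_ne_zero]; ring
  have hlow := sin_ge_sub_cube (x := t / 2) (by linarith)
  have hup := sin_le (x := t / 2) (by linarith)
  rw [hsin]
  nlinarith [mul_le_mul_of_nonneg_left hup (by linarith : (0 : ℝ) ≤ t - 2 * sin (t / 2))]

noncomputable def chordSqForm (p q s t : ℝ) : ℝ := 2 * p * (1 - cos s) + 2 * q * (1 - cos t)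

noncomputable def pseudoSqForm (p q s t : ℝ) : ℝ := p * s ^ 2 + q * t ^ 2

section Forms

variable {p q s t : ℝ}

lemma chordSqForm_le_pseudoSqForm (hp : 0 ≤ p) (hq : 0 ≤ q) :
    chordSqForm p q s t ≤ pseudoSqForm p q s t := by
  have hs := one_sub_sq_div_two_le_cos (x := s)
  have ht := one_sub_sq_div_two_le_cos (x := t)
  unfold chordSqForm pseudoSqForm
  nlinarith [mul_le_mul_of_nonneg_left hs hp, mul_le_mul_of_nonneg_left ht hq]

lemma pseudoSqForm_le_chordSqForm (hp : 0 ≤ p) (hq : 0 ≤ q) (hs : |s| ≤ π) (ht : |t| ≤ π) :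
    4 * pseudoSqForm p q s t ≤ π ^ 2 * chordSqForm p q s t := by
  have hπ : π ^ 2 ≠ 0 := by positivity
  have js := cos_le_one_sub_mul_cos_sq hs
  have jt := cos_le_one_sub_mul_cos_sq ht
  have ks : 2 * s ^ 2 ≤ π ^ 2 * (1 - cos s) := by
    have := mul_le_mul_of_nonneg_left js (sq_nonneg π); field_simp at this; linarith
  have kt : 2 * t ^ 2 ≤ π ^ 2 * (1 - cos t) := by
    have := mul_le_mul_of_nonneg_left jt (sq_nonneg π); field_simp at this; linarith
  unfold chordSqForm pseudoSqForm
  nlinarith [mul_le_mul_of_nonneg_left ks hp, mul_le_mul_of_nonneg_left kt hq]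

lemma pseudoSqForm_sub_chordSqForm_le (hp : 0 ≤ p) (hq : 0 ≤ q) :
    pseudoSqForm p q s t - chordSqForm p q s t ≤
      (s ^ 2 + t ^ 2) / 12 * pseudoSqForm p q s t := by
  have hs := mul_le_mul_of_nonneg_left (sq_sub_two_mul_one_sub_cos_le s) hp
  have ht := mul_le_mul_of_nonneg_left (sq_sub_two_mul_one_sub_cos_le t) hq
  unfold chordSqForm pseudoSqForm
  nlinarith [mul_nonneg hp (sq_nonneg (s * t)), mul_nonneg hq (sq_nonneg (s * t))]

lemma one_div_chordSqForm_sub_one_div_pseudoSqForm_mem_Icc {m : ℝ} (hm : 0 < m) (hp : m ≤ p)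
    (hq : m ≤ q) (hs : |s| ≤ π) (ht : |t| ≤ π) :
    1 / chordSqForm p q s t - 1 / pseudoSqForm p q s t ∈ Set.Icc 0 (π ^ 2 / (48 * m)) := by
  have hp0 : 0 ≤ p := hm.le.trans hp
  have hq0 : 0 ≤ q := hm.le.trans hq
  have hle := chordSqForm_le_pseudoSqForm (s := s) (t := t) hp0 hq0
  have hge := pseudoSqForm_le_chordSqForm hp0 hq0 hs ht
  have hdiff := pseudoSqForm_sub_chordSqForm_le (s := s) (t := t) hp0 hq0
  set A := chordSqForm p q s t
  set B := pseudoSqForm p q s t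
  have hmB : m * (s ^ 2 + t ^ 2) ≤ B := by
    simp only [B, pseudoSqForm]
    nlinarith [mul_le_mul_of_nonneg_right hp (sq_nonneg s),
      mul_le_mul_of_nonneg_right hq (sq_nonneg t)]
  have hπ : 0 < π ^ 2 := by positivity
  have hB0 : 0 ≤ B := le_trans (by positivity) hmB
  rcases hB0.eq_or_lt with hB_zero | hB_pos
  · have hA_zero : A = 0 := le_antisymm (hB_zero ▸ hle) (by nlinarith)
    simp only [hA_zero, ← hB_zero, div_zero, sub_self]
    exact ⟨le_rfl, by positivity⟩
  have hA_pos : 0 < A := by nlinarith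
  refine ⟨sub_nonneg.2 (one_div_le_one_div_of_le hA_pos hle), ?_⟩
  calc 1 / A - 1 / B = (B - A) / (A * B) := by field_simp
    _ ≤ (s ^ 2 + t ^ 2) / 12 * B / (A * B) := by gcongr
    _ = (s ^ 2 + t ^ 2) / (12 * A) := by field_simp
    _ ≤ π ^ 2 / (48 * m) := by
      rw [div_le_div_iff₀ (by positivity) (by positivity)]
      nlinarith [mul_le_mul_of_nonneg_left hmB (by positivity : (0 : ℝ) ≤ 4 * π ^ 2)]

end Forms

lemma torusIntegrand_eq (R r u v θ φ : ℝ) :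
    torusIntegrand R r (u, v, θ, φ) =
      1 / chordSqForm (r ^ 2) ((R - r * cos θ) * (R - r * cos φ)) (angDist θ φ) (angDist u v) -
        1 / pseudoSqForm (r ^ 2) ((R - r * cos θ) * (R - r * cos φ)) (angDist θ φ)
          (angDist u v) := by
  simp only [torusIntegrand, chordSqForm, pseudoSqForm, cos_angDist]
  congr 2
  linear_combination 2 * r ^ 2 * cos_sub θ φ + r ^ 2 * sin_sq_add_cos_sq θ +
    r ^ 2 * sin_sq_add_cos_sq φ

lemma abs_sub_le_two_pi {x y : ℝ} (hx : x ∈ Set.Icc 0 (2 * π)) (hy : y ∈ Set.Icc 0 (2 * π)) :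
    |x - y| ≤ 2 * π :=
  abs_sub_le_iff.2 ⟨by linarith [hx.2, hy.1], by linarith [hx.1, hy.2]⟩

lemma torusIntegrand_mem_Icc {R r : ℝ} (hRr : r < R) (hr : 0 < r) {x : ℝ × ℝ × ℝ × ℝ}
    (hx : x ∈ Set.Icc 0 (2 * π) ×ˢ Set.Icc 0 (2 * π) ×ˢ Set.Icc 0 (2 * π) ×ˢ Set.Icc 0 (2 * π)) :
    torusIntegrand R r x ∈ Set.Icc 0 (π ^ 2 / (48 * min (r ^ 2) ((R - r) ^ 2))) := by
  obtain ⟨u, v, θ, φ⟩ := x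
  obtain ⟨hu, hv, hθ, hφ⟩ := hx
  have hRr' : 0 ≤ R - r := by linarith
  have hab : (R - r) ^ 2 ≤ (R - r * cos θ) * (R - r * cos φ) := by
    rw [sq]
    gcongr <;> nlinarith [cos_le_one θ, cos_le_one φ]
  rw [torusIntegrand_eq]
  exact one_div_chordSqForm_sub_one_div_pseudoSqForm_mem_Icc
    (lt_min (by positivity) (by nlinarith)) (min_le_left _ _) ((min_le_right _ _).trans hab)
    (abs_angDist_le_pi (abs_sub_le_two_pi hθ hφ)) (abs_angDist_le_pi (abs_sub_le_two_pi hu hv))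

lemma measurable_torusIntegrand (R r : ℝ) : Measurable (torusIntegrand R r) := by
  unfold torusIntegrand angDist
  fun_prop

/-- For the torus with radii `R > r > 0`, the energy integrand is
nonnegative off the diagonal set `{δ(u,v) = 0 ∧ δ(θ,φ) = 0}` and Lebesgue integrable
on `[0, 2π]⁴`; in particular the tube energy of the torus is finite and nonnegative. -/
theorem torus_energy_finite_nonneg (R r : ℝ) (hRr : R > r) (hr : r > 0) :
    (∀ x : ℝ × ℝ × ℝ × ℝ,
        x ∈ Set.Icc 0 (2 * Real.pi) ×ˢ Set.Icc 0 (2 * Real.pi) ×ˢ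
            Set.Icc 0 (2 * Real.pi) ×ˢ Set.Icc 0 (2 * Real.pi) →
        ¬(angDist x.1 x.2.1 = 0 ∧ angDist x.2.2.1 x.2.2.2 = 0) →
        0 ≤ torusIntegrand R r x) ∧
      IntegrableOn (torusIntegrand R r)
        (Set.Icc 0 (2 * Real.pi) ×ˢ Set.Icc 0 (2 * Real.pi) ×ˢ
          Set.Icc 0 (2 * Real.pi) ×ˢ Set.Icc 0 (2 * Real.pi)) ∧
      0 ≤ ∫ x in Set.Icc 0 (2 * Real.pi) ×ˢ Set.Icc 0 (2 * Real.pi) ×ˢ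
            Set.Icc 0 (2 * Real.pi) ×ˢ Set.Icc 0 (2 * Real.pi),
          torusIntegrand R r x := by
  set S := Set.Icc 0 (2 * π) ×ˢ Set.Icc 0 (2 * π) ×ˢ Set.Icc 0 (2 * π) ×ˢ Set.Icc (0 : ℝ) (2 * π)
  have hS : MeasurableSet S :=
    measurableSet_Icc.prod (measurableSet_Icc.prod (measurableSet_Icc.prod measurableSet_Icc))
  have hS_finite : volume S < ⊤ :=
    (isCompact_Icc.prod (isCompact_Icc.prod (isCompact_Icc.prod isCompact_Icc))).measure_lt_top
  have hbound (x) (hx : x ∈ S) := torusIntegrand_mem_Icc hRr hr hx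
  refine ⟨fun x hx _ ↦ (hbound x hx).1, ?_, setIntegral_nonneg hS fun x hx ↦ (hbound x hx).1⟩
  exact Measure.integrableOn_of_bounded hS_finite.ne
    (measurable_torusIntegrand R r).aestronglyMeasurable
    (ae_restrict_of_forall_mem hS fun x hx ↦
      (norm_of_nonneg (hbound x hx).1).trans_le (hbound x hx).2)
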